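/- arXiv:1207.1057 — 4 statements merged into one kernel-verified Lean document; each statement's English description precedes it below -/
import Mathlib

section
/- Let $n: [0, \infty) \to (0, 1]$ be given by $n(d) = 1 - \int_0^d f(x)\, dx$ for a probability density $f \ge 0$ on $(0, \infty)$, and assume $n(d) > 0$. Then $\frac{1}{B}\int_0^d \left(x + \int_0^x (y - x) f(y)\, dy\right) \frac{f(x)}{1 - \int_0^x f(y)\, dy}\, dx = \frac{1}{B}\int_0^d n(x) \ln\left[\frac{n(x)}{n(d)}\right]\, dx$. -/
open MeasureTheory Set intervalIntegral

/-!
Write `n' = -f` and `N x = ∫₀ˣ n` (the total free length up to `x`). Integration by parts gives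
`x + ∫₀ˣ (y - x) f y dy = N x`, so the left integrand is `N f / n`. Since
`(N · log (n / n d))' = n log (n / n d) - N f / n` and `N · log (n / n d)` vanishes at `0` and at `d`,
the two integrals agree. Positivity of `n` between `0` and `d`, needed for the logarithm, holds because
`n` is antitone with `n 0 = 1`.
-/

theorem hasDerivAt_one_sub_integral {f : ℝ → ℝ} (hf : Continuous f) (a x : ℝ) :
    HasDerivAt (fun x => 1 - ∫ y in a..x, f y) (-f x) x :=
  (hf.integral_hasStrictDerivAt a x).hasDerivAt.const_sub 1

theorem antitone_one_sub_integral {f : ℝ → ℝ} (hf : Continuous f) (hf_nonneg : ∀ x, 0 ≤ f x)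
    (a : ℝ) : Antitone fun x => 1 - ∫ y in a..x, f y := by
  intro x y hxy
  have hsplit := integral_add_adjacent_intervals (μ := volume) (hf.intervalIntegrable a x)
    (hf.intervalIntegrable x y)
  have hmid := integral_nonneg (μ := volume) hxy fun u _ => hf_nonneg u
  linarith

theorem integral_sub_mul_eq_neg_integral_integral {f : ℝ → ℝ} (hf : Continuous f) (a x : ℝ) :
    ∫ y in a..x, (y - x) * f y = -∫ y in a..x, ∫ z in a..y, f z := by
  have := integral_mul_deriv_eq_deriv_mul (u := fun y => y - x) (u' := fun _ => 1)
    (fun y _ => (hasDerivAt_id y).sub_const x)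
    (fun y _ => (hf.integral_hasStrictDerivAt a y).hasDerivAt)
    intervalIntegrable_const (hf.intervalIntegrable a x)
  simpa using this

theorem integral_integral_mul_div_eq_integral_mul_log_div {n f : ℝ → ℝ} {a b : ℝ}
    (hn : ∀ x, HasDerivAt n (-f x) x) (hf : Continuous f) (hne : ∀ x ∈ uIcc a b, n x ≠ 0) :
    ∫ x in a..b, (∫ y in a..x, n y) * f x / n x = ∫ x in a..b, n x * Real.log (n x / n b) := by
  have hn_cont : Continuous n := continuous_iff_continuousAt.2 fun x => (hn x).continuousAt
  set N := fun x => ∫ y in a..x, n y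
  have hN_cont : Continuous N := continuous_primitive hn_cont.intervalIntegrable a
  have hnb := hne b right_mem_uIcc
  have hderiv : ∀ x ∈ uIcc a b, HasDerivAt (fun x => N x * Real.log (n x / n b))
      (n x * Real.log (n x / n b) - N x * f x / n x) x := by
    intro x hx
    have hlog := ((hn x).div_const (n b)).log (div_ne_zero (hne x hx) hnb)
    have hN : HasDerivAt N (n x) x := (hn_cont.integral_hasStrictDerivAt a x).hasDerivAt
    refine (hN.mul hlog).congr_deriv ?_
    field_simp
    ring
  have hentropy_cont : ContinuousOn (fun x => n x * Real.log (n x / n b)) (uIcc a b) :=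
    hn_cont.continuousOn.mul <|
      (hn_cont.div_const _).continuousOn.log fun x hx => div_ne_zero (hne x hx) hnb
  have hquot_cont : ContinuousOn (fun x => N x * f x / n x) (uIcc a b) :=
    ((hN_cont.mul hf).continuousOn).div hn_cont.continuousOn hne
  have hftc := integral_eq_sub_of_hasDerivAt hderiv
    (hentropy_cont.sub hquot_cont).intervalIntegrable
  rw [integral_sub hentropy_cont.intervalIntegrable
    hquot_cont.intervalIntegrable] at hftc
  simp only [div_self hnb, Real.log_one, mul_zero, integral_same, zero_mul, sub_self, N] at hftc
  linarith

theorem coarsening_law_entropy_form_general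
    (B : ℝ)
    (f : ℝ → ℝ) (hf_cont : Continuous f)
    (hf_nonneg : ∀ x : ℝ, 0 ≤ f x)
    (n : ℝ → ℝ) (hn : ∀ d : ℝ, n d = 1 - ∫ x in (0:ℝ)..d, f x)
    (d : ℝ) (hnd : 0 < n d) :
    (1/B) * ∫ x in (0:ℝ)..d,
        (x + ∫ y in (0:ℝ)..x, (y - x) * f y) * f x / (1 - ∫ y in (0:ℝ)..x, f y)
      = (1/B) * ∫ x in (0:ℝ)..d, n x * Real.log (n x / n d) := by
  have hn_eq : n = fun x => 1 - ∫ y in (0:ℝ)..x, f y := funext hn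
  have hn_pos : ∀ x ∈ uIcc 0 d, 0 < n x := by
    have hn0 : n 0 = 1 := by simp [hn]
    intro x hx
    exact (lt_min (hn0 ▸ one_pos) hnd).trans_le
      ((hn_eq ▸ antitone_one_sub_integral hf_cont hf_nonneg 0).mapsTo_uIcc hx).1
  have hprimitive : ∀ x, x + ∫ y in (0:ℝ)..x, (y - x) * f y = ∫ y in (0:ℝ)..x, n y := by
    intro x
    rw [integral_sub_mul_eq_neg_integral_integral hf_cont, hn_eq,
      intervalIntegral.integral_sub intervalIntegrable_const
      ((continuous_primitive hf_cont.intervalIntegrable 0).intervalIntegrable 0 x)]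
    simp [sub_eq_add_neg]
  congr 1
  simp_rw [hprimitive, ← hn]
  exact integral_integral_mul_div_eq_integral_mul_log_div
    (hn_eq ▸ hasDerivAt_one_sub_integral hf_cont 0) hf_cont fun x hx => (hn_pos x hx).ne'

theorem coarsening_law_entropy_form
    (B : ℝ) (hB : 0 < B)
    (f : ℝ → ℝ) (hf_cont : Continuous f)
    (hf_nonneg : ∀ x : ℝ, 0 ≤ f x)
    (hf_supp : ∀ x : ℝ, x ≤ 0 → f x = 0)
    (hf_prob : ∫ x in Set.Ioi (0:ℝ), f x = 1)
    (n : ℝ → ℝ) (hn : ∀ d : ℝ, n d = 1 - ∫ x in (0:ℝ)..d, f x)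
    (d : ℝ) (hd : 0 ≤ d) (hnd : 0 < n d) :
    (1/B) * ∫ x in (0:ℝ)..d,
        (x + ∫ y in (0:ℝ)..x, (y - x) * f y) * f x / (1 - ∫ y in (0:ℝ)..x, f y)
      = (1/B) * ∫ x in (0:ℝ)..d, n x * Real.log (n x / n d) :=
  coarsening_law_entropy_form_general B f hf_cont hf_nonneg n hn d hnd
end

section
/- Let $n(x) = (A/x)^{\alpha}$ for $x \ge A > 0$ and $n(x) = 1$ for $0 \le x \le A$, with $\alpha > 0$, $\alpha \ne 1$, $B > 0$. Then $T(d) = \frac{1}{B}\int_0^d n(x)\ln\left[\frac{n(x)}{n(d)}\right] dx = \frac{\alpha A}{B(\alpha - 1)}\left(\frac{1}{\alpha - 1}\left[\left(\frac{d}{A}\right)^{1-\alpha} - 1\right] + \alpha \ln\left(\frac{d}{A}\right)\right)$ for all $d \ge A$. -/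
/-!
On `[0, A]` the profile is constant, so that part of the integral is `A · α log (d / A)`.
On `[A, d]` the integrand is `α A^α x^(-α) log (d / x)`, and `x^p log (c / x)` has the elementary
antiderivative `x^(p+1)/(p+1) · log (c / x) + x^(p+1)/(p+1)^2` as long as `p ≠ -1`, i.e. `α ≠ 1`.
-/

open Real intervalIntegral

theorem hasDerivAt_rpow_mul_log_div_antideriv {p c x : ℝ} (hp : p ≠ -1) (hc : c ≠ 0)
    (hx : 0 < x) :
    HasDerivAt (fun y => y ^ (p + 1) / (p + 1) * log (c / y) + y ^ (p + 1) / (p + 1) ^ 2)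
      (x ^ p * log (c / x)) x := by
  have hp1 : p + 1 ≠ 0 := by contrapose! hp; linarith
  have hpow : HasDerivAt (fun y => y ^ (p + 1)) ((p + 1) * x ^ p) x := by
    simpa using hasDerivAt_rpow_const (p := p + 1) (Or.inl hx.ne')
  have hlog : HasDerivAt (fun y => log (c / y)) (-x⁻¹) x := by
    have := ((hasDerivAt_inv hx.ne').const_mul c).log (div_ne_zero hc hx.ne')
    convert this using 1
    · ext y; rw [div_eq_mul_inv]
    · field_simp
  refine (((hpow.div_const (p + 1)).mul hlog).add (hpow.div_const ((p + 1) ^ 2))).congr_deriv ?_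
  have hxp : x ^ (p + 1) = x ^ p * x := by rw [rpow_add hx, rpow_one]
  rw [hxp]
  field_simp
  ring

theorem intervalIntegrable_rpow_mul_log_div {a b c p : ℝ} (ha : 0 < a) (hb : 0 < b) :
    IntervalIntegrable (fun x => x ^ p * log (c / x)) MeasureTheory.volume a b := by
  rcases eq_or_ne c 0 with rfl | hc
  · simp
  refine ContinuousOn.intervalIntegrable fun x hx => ?_
  have hx0 : 0 < x := by
    rcases Set.mem_uIcc.mp hx with h | h <;> linarith [h.1]
  exact ((continuousAt_rpow_const x p (Or.inl hx0.ne')).mul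
    ((continuousAt_const.div continuousAt_id hx0.ne').log
      (div_ne_zero hc hx0.ne'))).continuousWithinAt

theorem integral_rpow_mul_log_div {a b p : ℝ} (ha : 0 < a) (hb : 0 < b) (hp : p ≠ -1) :
    ∫ x in a..b, x ^ p * log (b / x)
      = (b ^ (p + 1) - a ^ (p + 1)) / (p + 1) ^ 2 - a ^ (p + 1) / (p + 1) * log (b / a) := by
  rw [integral_eq_sub_of_hasDerivAt (fun x hx => hasDerivAt_rpow_mul_log_div_antideriv hp hb.ne' ?_)
    (intervalIntegrable_rpow_mul_log_div ha hb)]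
  · rw [div_self hb.ne', log_one]
    ring
  · rcases Set.mem_uIcc.mp hx with h | h <;> linarith [h.1]

theorem rpow_div_mul_log_rpow_div {A x d α : ℝ} (hA : 0 < A) (hx : 0 < x) (hd : 0 < d) :
    (A / x) ^ α * log ((A / x) ^ α / (A / d) ^ α) = α * A ^ α * (x ^ (-α) * log (d / x)) := by
  have hquot : (A / x) ^ α / (A / d) ^ α = (d / x) ^ α := by
    rw [← div_rpow (div_pos hA hx).le (div_pos hA hd).le]
    congr 1
    field_simp
  rw [hquot, log_rpow (div_pos hd hx), div_rpow hA.le hx.le, rpow_neg hx.le]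
  ring

theorem integral_power_law_mul_log {A α d : ℝ} {n : ℝ → ℝ} (hA : 0 < A) (hα1 : α ≠ 1)
    (hn : ∀ x, n x = if x ≤ A then 1 else (A / x) ^ α) (hd : A ≤ d) :
    ∫ x in (0:ℝ)..d, n x * log (n x / n d)
      = α * A / (α - 1) * (1 / (α - 1) * ((d / A) ^ (1 - α) - 1) + α * log (d / A)) := by
  have hd0 : 0 < d := hA.trans_le hd
  have hn_of_le : ∀ x ≤ A, n x = n A := fun x hx => by simp [hn, hx]
  have hn_of_ge : ∀ x, A ≤ x → n x = (A / x) ^ α := fun x hx => by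
    rcases hx.eq_or_lt with rfl | hx
    · simp [hn, div_self hA.ne']
    · simp [hn, hx.not_ge]
  have hlow : Set.EqOn (fun x => n x * log (n x / n d)) (fun _ => n A * log (n A / n d))
      (Set.uIcc 0 A) := fun x hx => by
    simp only [hn_of_le x (Set.uIcc_of_le hA.le ▸ hx).2]
  have hhigh : Set.EqOn (fun x => n x * log (n x / n d))
      (fun x => α * A ^ α * (x ^ (-α) * log (d / x))) (Set.uIcc A d) := fun x hx => by
    have hx : A ≤ x := (Set.uIcc_of_le hd ▸ hx).1
    simp only [hn_of_ge x hx, hn_of_ge d hd, rpow_div_mul_log_rpow_div hA (hA.trans_le hx) hd0]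
  have hint_low : IntervalIntegrable (fun x => n x * log (n x / n d)) MeasureTheory.volume 0 A :=
    (intervalIntegrable_congr (hlow.mono Set.uIoc_subset_uIcc)).mpr intervalIntegrable_const
  have hint_high : IntervalIntegrable (fun x => n x * log (n x / n d)) MeasureTheory.volume A d :=
    (intervalIntegrable_congr (hhigh.mono Set.uIoc_subset_uIcc)).mpr
      ((intervalIntegrable_rpow_mul_log_div hA hd0).const_mul _)
  rw [← integral_add_adjacent_intervals hint_low hint_high, integral_congr hlow,
    integral_congr hhigh, integral_const, integral_const_mul,
    integral_rpow_mul_log_div hA hd0 (neg_injective.ne hα1), hn_of_ge A le_rfl, hn_of_ge d hd,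
    rpow_div_mul_log_rpow_div hA hA hd0, neg_add_eq_sub, smul_eq_mul, sub_zero]
  have hA_neg : A ^ α * A ^ (-α) = 1 := by rw [← rpow_add hA, add_neg_cancel, rpow_zero]
  have hA_one_sub : A ^ α * A ^ (1 - α) = A := by rw [← rpow_add hA, add_sub_cancel, rpow_one]
  have hd_one_sub : A ^ α * d ^ (1 - α) = A * (d / A) ^ (1 - α) := by
    rw [div_rpow hd0.le hA.le]
    field_simp
    exact hA_one_sub
  have hα1' : α - 1 ≠ 0 := sub_ne_zero.mpr hα1
  have h1α : 1 - α ≠ 0 := sub_ne_zero.mpr hα1.symm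
  linear_combination (norm := skip) (A * α * log (d / A)) * hA_neg
    - α * (1 / (1 - α) ^ 2 + log (d / A) / (1 - α)) * hA_one_sub
    + α / (1 - α) ^ 2 * hd_one_sub
  field_simp
  ring

theorem power_law_coarsening_time_general
    (A B α : ℝ) (hA : 0 < A) (hα1 : α ≠ 1)
    (n : ℝ → ℝ)
    (hn : ∀ x : ℝ, n x = if x ≤ A then 1 else (A / x) ^ α) :
    ∀ d : ℝ, A ≤ d →
      (1/B) * ∫ x in (0:ℝ)..d, n x * Real.log (n x / n d)
        = (α * A) / (B * (α - 1)) *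
          ((1 / (α - 1)) * ((d / A) ^ (1 - α) - 1) + α * Real.log (d / A)) := by
  intro d hd
  rw [integral_power_law_mul_log hA hα1 hn hd, mul_comm B, ← div_div]
  ring

theorem power_law_coarsening_time
    (A B α : ℝ) (hA : 0 < A) (hB : 0 < B) (hα : 0 < α) (hα1 : α ≠ 1)
    (n : ℝ → ℝ)
    (hn : ∀ x : ℝ, n x = if x ≤ A then 1 else (A / x) ^ α) :
    ∀ d : ℝ, A ≤ d →
      (1/B) * ∫ x in (0:ℝ)..d, n x * Real.log (n x / n d)
        = (α * A) / (B * (α - 1)) *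
          ((1 / (α - 1)) * ((d / A) ^ (1 - α) - 1) + α * Real.log (d / A)) :=
  power_law_coarsening_time_general A B α hA hα1 n hn
end

section
/- Let $n(x) = A/x$ for $x \ge A > 0$ and $n(x) = 1$ for $0 \le x \le A$, and $B > 0$. Then $T(d) = \frac{1}{B}\int_0^d n(x)\ln\left[\frac{n(x)}{n(d)}\right] dx = \frac{A}{B}\left(\frac{1}{2}\left[\ln\left(\frac{d}{A}\right)\right]^2 + \ln\left(\frac{d}{A}\right)\right)$ for $d \ge A$, and consequently the coarsening rate is $n(t) = \exp\left[1 - \sqrt{1 + 2Bt/A}\right]$ where $n(t)$ denotes $n(d)$ evaluated at the $d$ with $T(d) = t$. -/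
/-!
On `[0, A]` the density is `1`, so the integrand is the constant `log (d / A)`; on `[A, d]` it is
`(A / x) log (d / x)`, with antiderivative `A (log d log x - (log x)² / 2)`. With `L = log (d / A)`
this gives `B T(d) = A (L² / 2 + L)`, i.e. `1 + 2 B T(d) / A = (1 + L)²`, and inverting,
`n(d) = A / d = exp (-L) = exp (1 - √(1 + 2 B T(d) / A))`.
-/

open Real Set intervalIntegral

theorem continuousOn_inv_mul_log_div {a b : ℝ} (ha : 0 < a) (hb : 0 < b) :
    ContinuousOn (fun x => x⁻¹ * log (b / x)) (uIcc a b) := by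
  have hpos : ∀ x ∈ uIcc a b, 0 < x := fun x hx => (lt_min ha hb).trans_le hx.1
  fun_prop (disch := first
    | exact fun x hx => (hpos x hx).ne'
    | exact fun x hx => (div_pos hb (hpos x hx)).ne')

theorem integral_inv_mul_log_div {a b : ℝ} (ha : 0 < a) (hb : 0 < b) :
    ∫ x in a..b, x⁻¹ * log (b / x) = log (b / a) ^ 2 / 2 := by
  have hpos : ∀ x ∈ uIcc a b, 0 < x := fun x hx => (lt_min ha hb).trans_le hx.1
  have hlog_div : EqOn (fun x => x⁻¹ * log (b / x)) (fun x => x⁻¹ * (log b - log x)) (uIcc a b) :=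
    fun x hx => by dsimp only; rw [log_div hb.ne' (hpos x hx).ne']
  have hderiv : ∀ x ∈ uIcc a b,
      HasDerivAt (fun x => log b * log x - log x ^ 2 / 2) (x⁻¹ * (log b - log x)) x := by
    intro x hx
    have hlog := hasDerivAt_log (hpos x hx).ne'
    refine ((hlog.const_mul (log b)).fun_sub ((hlog.fun_pow 2).div_const 2)).congr_deriv ?_
    ring
  have hint : IntervalIntegrable (fun x => x⁻¹ * (log b - log x)) MeasureTheory.volume a b :=
    ((continuousOn_inv_mul_log_div ha hb).congr hlog_div.symm).intervalIntegrable
  rw [integral_congr hlog_div, integral_eq_sub_of_hasDerivAt hderiv hint, log_div hb.ne' ha.ne']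
  ring

noncomputable def thresholdDensity (A x : ℝ) : ℝ := if x ≤ A then 1 else A / x

theorem thresholdDensity_of_le {A x : ℝ} (h : x ≤ A) : thresholdDensity A x = 1 := if_pos h

theorem thresholdDensity_of_ge {A x : ℝ} (hA : A ≠ 0) (h : A ≤ x) :
    thresholdDensity A x = A / x := by
  rcases h.eq_or_lt with rfl | hlt
  · rw [thresholdDensity_of_le le_rfl, div_self hA]
  · exact if_neg hlt.not_ge

theorem integral_thresholdDensity_mul_log {A d : ℝ} (hA : 0 < A) (hAd : A ≤ d) :
    ∫ x in 0..d, thresholdDensity A x * log (thresholdDensity A x / thresholdDensity A d) =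
      A * (log (d / A) ^ 2 / 2 + log (d / A)) := by
  set f := fun x => thresholdDensity A x * log (thresholdDensity A x / thresholdDensity A d)
  have hd : 0 < d := hA.trans_le hAd
  have hnd : thresholdDensity A d = A / d := thresholdDensity_of_ge hA.ne' hAd
  have hflat : EqOn f (fun _ => log (d / A)) (uIcc 0 A) := fun x hx => by
    rw [uIcc_of_le hA.le] at hx
    simp only [f, thresholdDensity_of_le hx.2, hnd, one_mul, one_div_div]
  have htail : EqOn f (fun x => A * (x⁻¹ * log (d / x))) (uIcc A d) := fun x hx => by
    rw [uIcc_of_le hAd] at hx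
    simp only [f, thresholdDensity_of_ge hA.ne' hx.1, hnd]
    rw [div_div_div_cancel_left' _ _ hA.ne']
    ring
  have hint_flat : IntervalIntegrable f MeasureTheory.volume 0 A :=
    (intervalIntegrable_congr (hflat.mono uIoc_subset_uIcc)).mpr intervalIntegrable_const
  have hint_tail : IntervalIntegrable f MeasureTheory.volume A d := by
    refine (intervalIntegrable_congr (htail.mono uIoc_subset_uIcc)).mpr ?_
    exact ((continuousOn_inv_mul_log_div hA hd).const_mul A).intervalIntegrable
  rw [← integral_add_adjacent_intervals hint_flat hint_tail, integral_congr hflat,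
    integral_congr htail, integral_const, integral_const_mul, integral_inv_mul_log_div hA hd]
  simp only [sub_zero, smul_eq_mul]
  ring

theorem threshold_coarsening_law
    (A B : ℝ) (hA : 0 < A) (hB : 0 < B)
    (n : ℝ → ℝ)
    (hn : ∀ x : ℝ, n x = if x ≤ A then 1 else A / x)
    (T : ℝ → ℝ)
    (hT : ∀ d : ℝ, T d = (1/B) * ∫ x in (0:ℝ)..d, n x * Real.log (n x / n d)) :
    (∀ d : ℝ, A ≤ d →
      T d = (A / B) * ((Real.log (d / A))^2 / 2 + Real.log (d / A))) ∧
    (∀ d : ℝ, A ≤ d →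
      n d = Real.exp (1 - Real.sqrt (1 + 2 * B * T d / A))) := by
  obtain rfl : n = thresholdDensity A := funext hn
  have hT_eq : ∀ d, A ≤ d → T d = (A / B) * (log (d / A) ^ 2 / 2 + log (d / A)) := by
    intro d hd
    rw [hT, integral_thresholdDensity_mul_log hA hd]
    ring
  refine ⟨hT_eq, fun d hd => ?_⟩
  set L := log (d / A)
  have hL : 0 ≤ L := log_nonneg ((one_le_div hA).mpr hd)
  have hsq : 1 + 2 * B * T d / A = (1 + L) ^ 2 := by
    rw [hT_eq d hd]
    field_simp
    ring
  rw [thresholdDensity_of_ge hA.ne' hd, hsq, sqrt_sq (by linarith), sub_add_cancel_left,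
    ← log_inv, inv_div, exp_log (div_pos hA (hA.trans_le hd))]
end

section
/- Let $n(x) = (1+x^2)e^{-x}$ and $B > 0$, and $T(d) = \frac{1}{B}\int_0^d n(x)\ln\left[\frac{n(x)}{n(d)}\right] dx$. Then $T(d) = \frac{3d}{B} + o(d)$ as $d \to \infty$. -/
/-!
Splitting the logarithm, `∫₀^d n log (n / n(d)) = ∫₀^d n log n - log n(d) · ∫₀^d n`.
The first term stays bounded because `|n log n| ≤ (x + x² + x³ + x⁴) e^{-x}`, the mass
`∫₀^d n` tends to `3`, and `log n(d) = -d + log (1 + d²) = -d + o(d)`; hence the whole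
expression is `3d + o(d)`.
-/

open Filter Asymptotics Real Topology

lemma mul_log_div_eq {a b : ℝ} (hb : b ≠ 0) : a * log (a / b) = a * log a - log b * a := by
  rcases eq_or_ne a 0 with rfl | ha
  · simp
  · rw [log_div ha hb]; ring

lemma intervalIntegral_mul_log_div {n : ℝ → ℝ} (hn : Continuous n) {d : ℝ}
    (hd : n d ≠ 0) :
    ∫ x in (0:ℝ)..d, n x * log (n x / n d)
      = (∫ x in (0:ℝ)..d, n x * log (n x)) - log (n d) * ∫ x in (0:ℝ)..d, n x := by
  simp_rw [mul_log_div_eq hd]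
  rw [intervalIntegral.integral_sub, intervalIntegral.integral_const_mul]
  · exact (continuous_mul_log.comp hn).intervalIntegrable _ _
  · exact (continuous_const.mul hn).intervalIntegrable _ _

theorem isLittleO_intervalIntegral_mul_log_div_sub {n : ℝ → ℝ} {c M : ℝ} (hn : Continuous n)
    (hne : ∀ᶠ d in atTop, n d ≠ 0)
    (hmass : Tendsto (fun d => ∫ x in (0:ℝ)..d, n x) atTop (𝓝 M))
    (hent : (fun d => ∫ x in (0:ℝ)..d, n x * log (n x)) =o[atTop] fun d => d)
    (hdecay : (fun d => log (n d) + c * d) =o[atTop] fun d => d) :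
    (fun d => (∫ x in (0:ℝ)..d, n x * log (n x / n d)) - c * M * d) =o[atTop] fun d => d := by
  set N := fun d => ∫ x in (0:ℝ)..d, n x
  have hN : N =O[atTop] (1 : ℝ → ℝ) := hmass.isBigO_one ℝ
  have hNM : (fun d => N d - M) =o[atTop] (1 : ℝ → ℝ) :=
    isLittleO_one_iff ℝ |>.mpr (tendsto_sub_nhds_zero_iff.mpr hmass)
  have hcd : (fun d : ℝ => c * d) =O[atTop] fun d => d := (isBigO_refl _ _).const_mul_left c
  have hdecayN : (fun d => (log (n d) + c * d) * N d) =o[atTop] fun d => d := by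
    simpa using hdecay.mul_isBigO hN
  have htail : (fun d => c * d * (N d - M)) =o[atTop] fun d => d := by
    simpa using hcd.mul_isLittleO hNM
  have key := (hent.sub hdecayN).add htail
  refine key.congr' ?_ EventuallyEq.rfl
  filter_upwards [hne] with d hd
  rw [intervalIntegral_mul_log_div hn hd]
  ring

lemma hasDerivAt_neg_quadratic_mul_exp_neg (x : ℝ) :
    HasDerivAt (fun x => -((x^2 + 2*x + 3) * exp (-x))) ((1 + x^2) * exp (-x)) x := by
  have hpoly : HasDerivAt (fun x : ℝ => x^2 + 2*x + 3) (2*x + 2) x := by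
    simpa using (((hasDerivAt_pow 2 x).add ((hasDerivAt_id x).const_mul 2)).add_const 3)
  have hexp : HasDerivAt (fun x : ℝ => exp (-x)) (-exp (-x)) x := by
    simpa using (hasDerivAt_neg x).exp
  exact (hpoly.mul hexp).neg.congr_deriv (by ring)

lemma intervalIntegral_one_add_sq_mul_exp_neg (d : ℝ) :
    ∫ x in (0:ℝ)..d, (1 + x^2) * exp (-x) = 3 - (d^2 + 2*d + 3) * exp (-d) := by
  rw [intervalIntegral.integral_eq_sub_of_hasDerivAt
    (fun x _ => hasDerivAt_neg_quadratic_mul_exp_neg x)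
    ((by fun_prop : Continuous fun x : ℝ => (1 + x^2) * exp (-x)).intervalIntegrable _ _)]
  norm_num
  ring

lemma tendsto_intervalIntegral_one_add_sq_mul_exp_neg :
    Tendsto (fun d => ∫ x in (0:ℝ)..d, (1 + x^2) * exp (-x)) atTop (𝓝 3) := by
  have h := ((tendsto_pow_mul_exp_neg_atTop_nhds_zero 2).add
    ((tendsto_pow_mul_exp_neg_atTop_nhds_zero 1).const_mul 2)).add
    (tendsto_exp_neg_atTop_nhds_zero.const_mul 3)
  simp_rw [intervalIntegral_one_add_sq_mul_exp_neg]
  simpa using (tendsto_const_nhds (x := (3:ℝ))).sub (h.congr fun d => by ring)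

lemma log_one_add_sq_mul_exp_neg (x : ℝ) :
    log ((1 + x^2) * exp (-x)) = log (1 + x^2) - x := by
  rw [log_mul (by positivity) (exp_pos _).ne', log_exp]
  ring

lemma abs_log_one_add_sq_mul_exp_neg_le {x : ℝ} (hx : 0 ≤ x) :
    |log ((1 + x^2) * exp (-x))| ≤ x^2 + x := by
  have hle : log (1 + x^2) ≤ x^2 := by
    linarith [log_le_sub_one_of_pos (x := 1 + x^2) (by positivity)]
  have hnonneg : 0 ≤ log (1 + x^2) := log_nonneg (by nlinarith)
  rw [log_one_add_sq_mul_exp_neg, abs_le]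
  constructor <;> linarith

lemma abs_intervalIntegral_mul_log_one_add_sq_mul_exp_neg_le {d : ℝ} (hd : 0 ≤ d) :
    |∫ x in (0:ℝ)..d, (1 + x^2) * exp (-x) * log ((1 + x^2) * exp (-x))| ≤ 33 := by
  have hmoment (k : ℕ) : ∫ x in (0:ℝ)..d, x^k * exp (-x) ≤ k.factorial := by
    simpa using intervalIntegral_pow_mul_exp_neg_le (k := k) hd one_pos
  have hint (k : ℕ) :
      IntervalIntegrable (fun x : ℝ => x^k * exp (-x)) MeasureTheory.volume 0 d :=
    (by fun_prop : Continuous fun x : ℝ => x^k * exp (-x)).intervalIntegrable _ _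
  calc |∫ x in (0:ℝ)..d, (1 + x^2) * exp (-x) * log ((1 + x^2) * exp (-x))|
      ≤ ∫ x in (0:ℝ)..d, |(1 + x^2) * exp (-x) * log ((1 + x^2) * exp (-x))| :=
        intervalIntegral.abs_integral_le_integral_abs hd
    _ ≤ ∫ x in (0:ℝ)..d,
          (x^1 * exp (-x) + x^2 * exp (-x) + x^3 * exp (-x) + x^4 * exp (-x)) := by
        refine intervalIntegral.integral_mono_on hd ?_ ?_ fun x hx => ?_
        · exact (by fun_prop : Continuous fun x : ℝ =>
            |(1 + x^2) * exp (-x) * log ((1 + x^2) * exp (-x))|).intervalIntegrable _ _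
        · exact (((hint 1).add (hint 2)).add (hint 3)).add (hint 4)
        · rw [abs_mul, abs_of_pos (by positivity : 0 < (1 + x^2) * exp (-x))]
          calc (1 + x^2) * exp (-x) * |log ((1 + x^2) * exp (-x))|
              ≤ (1 + x^2) * exp (-x) * (x^2 + x) := by
                gcongr; exact abs_log_one_add_sq_mul_exp_neg_le hx.1
            _ = _ := by ring
    _ ≤ (Nat.factorial 1 + Nat.factorial 2 + Nat.factorial 3 + Nat.factorial 4 : ℕ) := by
        rw [intervalIntegral.integral_add (((hint 1).add (hint 2)).add (hint 3)) (hint 4),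
          intervalIntegral.integral_add ((hint 1).add (hint 2)) (hint 3),
          intervalIntegral.integral_add (hint 1) (hint 2)]
        push_cast
        linarith [hmoment 1, hmoment 2, hmoment 3, hmoment 4]
    _ = 33 := by norm_num [Nat.factorial]

lemma isLittleO_log_one_add_sq : (fun x : ℝ => log (1 + x^2)) =o[atTop] fun x => x := by
  have hlog : (fun x : ℝ => log (1 + x)) =o[atTop] fun x => x :=
    (isLittleO_log_id_atTop.comp_tendsto (tendsto_atTop_add_const_left _ 1 tendsto_id)).trans_isBigO
      ((isLittleO_const_id_atTop (1:ℝ)).isBigO.add (isBigO_refl id atTop))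
  refine (IsBigO.of_bound 2 ?_).trans_isLittleO hlog
  filter_upwards [eventually_ge_atTop 0] with x hx
  have hsq : 1 + x^2 ≤ (1 + x)^2 := by nlinarith
  rw [norm_of_nonneg (log_nonneg (by nlinarith)), norm_of_nonneg (log_nonneg (by linarith))]
  calc log (1 + x^2) ≤ log ((1 + x)^2) := log_le_log (by positivity) hsq
    _ = 2 * log (1 + x) := by rw [log_pow]; norm_num

theorem nonmonotone_coarsening_asymptotics_general
    (B : ℝ)
    (n : ℝ → ℝ) (hn : ∀ x : ℝ, n x = (1 + x^2) * Real.exp (-x))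
    (T : ℝ → ℝ)
    (hT : ∀ d : ℝ, T d = (1/B) * ∫ x in (0:ℝ)..d, n x * Real.log (n x / n d)) :
    (fun d : ℝ => T d - 3 * d / B) =o[atTop] (fun d : ℝ => d) := by
  obtain rfl : n = fun x => (1 + x^2) * exp (-x) := funext hn
  have hent : (fun d => ∫ x in (0:ℝ)..d, (1 + x^2) * exp (-x) * log ((1 + x^2) * exp (-x)))
      =o[atTop] fun d => d :=
    (IsBigO.of_bound 33 <| (eventually_ge_atTop 0).mono fun d hd => by
      simpa using abs_intervalIntegral_mul_log_one_add_sq_mul_exp_neg_le hd).trans_isLittleO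
      (isLittleO_const_id_atTop (1:ℝ))
  have hdecay : (fun d => log ((1 + d^2) * exp (-d)) + 1 * d) =o[atTop] fun d => d := by
    simpa [log_one_add_sq_mul_exp_neg] using isLittleO_log_one_add_sq
  have key := isLittleO_intervalIntegral_mul_log_div_sub (by fun_prop)
    (.of_forall fun d => by positivity) tendsto_intervalIntegral_one_add_sq_mul_exp_neg hent hdecay
  refine (key.const_mul_left B⁻¹).congr_left fun d => ?_
  rw [hT]
  ring

theorem nonmonotone_coarsening_asymptotics
    (B : ℝ) (hB : 0 < B)
    (n : ℝ → ℝ) (hn : ∀ x : ℝ, n x = (1 + x^2) * Real.exp (-x))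
    (T : ℝ → ℝ)
    (hT : ∀ d : ℝ, T d = (1/B) * ∫ x in (0:ℝ)..d, n x * Real.log (n x / n d)) :
    (fun d : ℝ => T d - 3 * d / B) =o[atTop] (fun d : ℝ => d) :=
  nonmonotone_coarsening_asymptotics_general B n hn T hT
end
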